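/- Let S = (C × C)/G be a surface isogenous to a product of mixed type with p_g = 0 given by the first family in the classification (G = G(64,92), G⁰ = G(32,46), g(C) = 9). Let D₁, D₂, D₃, D₄ be four distinct irreducible effective orbit divisors on S satisfying D_i² = 0 for all i, D₁·D₄ = D₂·D₃ = 0, and D₁·D₂ = D₁·D₃ = D₂·D₄ = D₃·D₄ = 4. Then Eff(S) = Nef(S) = SAmp(S) = ℝ≥0⟨D₁, D₂⟩, and in particular S is a Mori dream surface with no negative curves. -/

import Mathlib

/-!
With `e = [D₁]`, `f = [D₂]` isotropic and `e·f = 4 > 0`, the pair is a basis of the rank-two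
space `N¹(S)`, in which `x = (x·f / e·f) e + (x·e / e·f) f`. So a class is determined by its
intersections with `e` and `f`, which forces `[D₄] = [D₁]` and `[D₃] = [D₂]`; being disjoint from
a numerically equivalent curve, `D₁` and `D₂` are semiample. The cone `ℝ≥0⟨e, f⟩` is self-dual for
the intersection form, lies in `SAmp ⊆ Nef`, and contains `Nef = Eff^∨` since `e, f` are effective;
dualising once more gives `Eff = Nef^∨ = ℝ≥0⟨e, f⟩`.
-/

def pairCone (K : Type*) {V : Type*} [Semiring K] [PartialOrder K] [AddCommMonoid V] [Module K V]
    (e f : V) : Set V :=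
  {x | ∃ a b : K, 0 ≤ a ∧ 0 ≤ b ∧ x = a • e + b • f}

theorem pairCone_subset {K V : Type*} [Semiring K] [PartialOrder K] [AddCommMonoid V] [Module K V]
    {S : Set V} (hadd : ∀ x ∈ S, ∀ y ∈ S, x + y ∈ S) (hsmul : ∀ x ∈ S, ∀ c : K, 0 ≤ c → c • x ∈ S)
    {e f : V} (he : e ∈ S) (hf : f ∈ S) : pairCone K e f ⊆ S := by
  rintro x ⟨a, b, ha, hb, rfl⟩
  exact hadd _ (hsmul _ he a ha) _ (hsmul _ hf b hb)

namespace LinearMap.BilinForm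

variable {K V : Type*} [Field K] [AddCommGroup V] [Module K V]
  {B : LinearMap.BilinForm K V} {e f : V}

structure IsIsotropicPair (B : LinearMap.BilinForm K V) (e f : V) : Prop where
  left : B e e = 0
  right : B f f = 0
  apply_ne_zero : B e f ≠ 0

namespace IsIsotropicPair

theorem apply_smul_add_smul (h : B.IsIsotropicPair e f) (hB : B.IsSymm) (a b c d : K) :
    B (a • e + b • f) (c • e + d • f) = (a * d + b * c) * B e f := by
  simp only [map_add, map_smul, LinearMap.add_apply, LinearMap.smul_apply, smul_eq_mul, h.left,
    h.right, hB.eq f e]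
  ring

theorem apply_smul_add_smul_left (h : B.IsIsotropicPair e f) (hB : B.IsSymm) (a b : K) :
    B (a • e + b • f) e = b * B e f := by
  simpa using h.apply_smul_add_smul hB a b 1 0

theorem apply_smul_add_smul_right (h : B.IsIsotropicPair e f) (hB : B.IsSymm) (a b : K) :
    B (a • e + b • f) f = a * B e f := by
  simpa using h.apply_smul_add_smul hB a b 0 1

theorem linearIndependent (h : B.IsIsotropicPair e f) (hB : B.IsSymm) :
    LinearIndependent K ![e, f] := by
  refine LinearIndependent.pair_iff.mpr fun a b hab => ?_
  have hae := h.apply_smul_add_smul_right hB a b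
  have hbf := h.apply_smul_add_smul_left hB a b
  simp only [hab, map_zero, LinearMap.zero_apply] at hae hbf
  exact ⟨(mul_eq_zero.mp hae.symm).resolve_right h.apply_ne_zero,
    (mul_eq_zero.mp hbf.symm).resolve_right h.apply_ne_zero⟩

theorem eq_smul_add_smul (h : B.IsIsotropicPair e f) (hB : B.IsSymm)
    (hdim : Module.finrank K V = 2) (x : V) :
    x = (B x f / B e f) • e + (B x e / B e f) • f := by
  have hspan := h.linearIndependent hB |>.span_eq_top_of_card_eq_finrank (by simp [hdim])
  rw [Matrix.range_cons_cons_empty] at hspan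
  obtain ⟨a, b, rfl⟩ := Submodule.mem_span_pair.mp (hspan ▸ Submodule.mem_top : x ∈ _)
  rw [h.apply_smul_add_smul_left hB, h.apply_smul_add_smul_right hB,
    mul_div_cancel_right₀ _ h.apply_ne_zero, mul_div_cancel_right₀ _ h.apply_ne_zero]

theorem ext (h : B.IsIsotropicPair e f) (hB : B.IsSymm) (hdim : Module.finrank K V = 2)
    {x y : V} (hxe : B x e = B y e) (hxf : B x f = B y f) : x = y := by
  rw [h.eq_smul_add_smul hB hdim x, h.eq_smul_add_smul hB hdim y, hxe, hxf]

section Ordered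

variable [LinearOrder K] [IsStrictOrderedRing K]

theorem mem_pairCone_iff (h : B.IsIsotropicPair e f) (hB : B.IsSymm)
    (hdim : Module.finrank K V = 2) (hpos : 0 < B e f) {x : V} :
    x ∈ pairCone K e f ↔ 0 ≤ B x e ∧ 0 ≤ B x f := by
  constructor
  · rintro ⟨a, b, ha, hb, rfl⟩
    rw [h.apply_smul_add_smul_left hB, h.apply_smul_add_smul_right hB]
    exact ⟨by positivity, by positivity⟩
  · rintro ⟨hxe, hxf⟩
    exact ⟨_, _, by positivity, by positivity, h.eq_smul_add_smul hB hdim x⟩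

theorem apply_nonneg_of_mem_pairCone (h : B.IsIsotropicPair e f) (hB : B.IsSymm)
    (hpos : 0 < B e f) {x y : V} (hx : x ∈ pairCone K e f) (hy : y ∈ pairCone K e f) :
    0 ≤ B x y := by
  obtain ⟨a, b, ha, hb, rfl⟩ := hx
  obtain ⟨c, d, hc, hd, rfl⟩ := hy
  rw [h.apply_smul_add_smul hB]
  positivity

theorem cones_eq_pairCone (h : B.IsIsotropicPair e f) (hB : B.IsSymm)
    (hdim : Module.finrank K V = 2) (hpos : 0 < B e f) {Eff Nef SAmp : Set V}
    (hSadd : ∀ x ∈ SAmp, ∀ y ∈ SAmp, x + y ∈ SAmp)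
    (hSsmul : ∀ x ∈ SAmp, ∀ c : K, 0 ≤ c → c • x ∈ SAmp) (hSN : SAmp ⊆ Nef)
    (hNefdual : Nef = {x : V | ∀ y ∈ Eff, 0 ≤ B x y})
    (hEffdual : Eff = {x : V | ∀ y ∈ Nef, 0 ≤ B x y})
    (heEff : e ∈ Eff) (hfEff : f ∈ Eff) (heS : e ∈ SAmp) (hfS : f ∈ SAmp) :
    Eff = pairCone K e f ∧ Nef = pairCone K e f ∧ SAmp = pairCone K e f := by
  have hCS : pairCone K e f ⊆ SAmp := pairCone_subset hSadd hSsmul heS hfS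
  have hNC : Nef ⊆ pairCone K e f := fun x hx => by
    rw [hNefdual] at hx
    exact (h.mem_pairCone_iff hB hdim hpos).mpr ⟨hx e heEff, hx f hfEff⟩
  have hNef : Nef = pairCone K e f := hNC.antisymm (hCS.trans hSN)
  refine ⟨?_, hNef, (hSN.trans hNC).antisymm hCS⟩
  rw [hEffdual, hNef]
  ext x
  refine ⟨fun hx => (h.mem_pairCone_iff hB hdim hpos).mpr ⟨hx e ?_, hx f ?_⟩,
    fun hx y hy => h.apply_nonneg_of_mem_pairCone hB hpos hx hy⟩
  · exact ⟨1, 0, zero_le_one, le_rfl, by simp⟩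
  · exact ⟨0, 1, le_rfl, zero_le_one, by simp⟩

end Ordered

end IsIsotropicPair
end LinearMap.BilinForm

theorem stmt_11_general (V : Type*) [AddCommGroup V] [Module ℝ V]
    (hdim : Module.finrank ℝ V = 2)
    (B : V →ₗ[ℝ] V →ₗ[ℝ] ℝ) (hsymm : ∀ x y : V, B x y = B y x)
    (Div : Type*) (cls : Div → V) (EffDiv : Set Div)
    (Eff Nef SAmp : Set V)
    (hSadd : ∀ x ∈ SAmp, ∀ y ∈ SAmp, x + y ∈ SAmp)
    (hSsmul : ∀ x ∈ SAmp, ∀ c : ℝ, 0 ≤ c → c • x ∈ SAmp)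
    (hSN : SAmp ⊆ Nef)
    (hNefdual : Nef = {x : V | ∀ y ∈ Eff, 0 ≤ B x y})
    (hEffdual : Eff = {x : V | ∀ y ∈ Nef, 0 ≤ B x y})
    (hcls : ∀ A ∈ EffDiv, cls A ∈ Eff)
    (hsa : ∀ A ∈ EffDiv, ∀ A' ∈ EffDiv, A ≠ A' → cls A = cls A' →
      B (cls A) (cls A') = 0 → cls A ∈ SAmp)
    (D1 D2 D3 D4 : Div)
    (hD1 : D1 ∈ EffDiv) (hD2 : D2 ∈ EffDiv) (hD3 : D3 ∈ EffDiv) (hD4 : D4 ∈ EffDiv)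
    (hne14 : D1 ≠ D4) (hne23 : D2 ≠ D3)
    (h11 : B (cls D1) (cls D1) = 0) (h22 : B (cls D2) (cls D2) = 0)
    (h14 : B (cls D1) (cls D4) = 0) (h23 : B (cls D2) (cls D3) = 0)
    (h12 : B (cls D1) (cls D2) = 4) (h13 : B (cls D1) (cls D3) = 4)
    (h24 : B (cls D2) (cls D4) = 4) :
    Eff = Nef ∧ Nef = SAmp ∧
      SAmp = {x : V | ∃ a b : ℝ, 0 ≤ a ∧ 0 ≤ b ∧ x = a • cls D1 + b • cls D2} ∧
      ∀ A ∈ EffDiv, 0 ≤ B (cls A) (cls A) := by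
  have hB : LinearMap.BilinForm.IsSymm B := ⟨hsymm⟩
  have hpos : 0 < B (cls D1) (cls D2) := by rw [h12]; norm_num
  have hpair : LinearMap.BilinForm.IsIsotropicPair B (cls D1) (cls D2) := ⟨h11, h22, hpos.ne'⟩
  have hD41 : cls D4 = cls D1 :=
    hpair.ext hB hdim (by rw [hsymm, h14, h11]) (by rw [hsymm, h24, h12])
  have hD32 : cls D3 = cls D2 :=
    hpair.ext hB hdim (by rw [hsymm, h13, hsymm, h12]) (by rw [hsymm, h23, h22])
  obtain ⟨hEff, hNef, hSAmp⟩ := hpair.cones_eq_pairCone hB hdim hpos hSadd hSsmul hSN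
    hNefdual hEffdual (hcls D1 hD1) (hcls D2 hD2)
    (hsa D1 hD1 D4 hD4 hne14 hD41.symm h14) (hsa D2 hD2 D3 hD3 hne23 hD32.symm h23)
  refine ⟨hEff.trans hNef.symm, hNef.trans hSAmp.symm, hSAmp, fun A hA => ?_⟩
  have hA' : cls A ∈ pairCone ℝ (cls D1) (cls D2) := hEff ▸ hcls A hA
  exact hpair.apply_nonneg_of_mem_pairCone hB hpos hA' hA'

/-- Let `S = (C × C)/G` be the mixed surface isogenous to a product with
`p_g = 0` of the first family (`G = G(64,92)`, `G⁰ = G(32,46)`, `g(C) = 9`): a fake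
quadric with `ρ(S) = 2`. We model `N¹(S)` as a 2-dimensional real vector space `V`
with symmetric intersection form `B`, the set `EffDiv` of irreducible effective
divisors with class map `cls`, and the cones `Eff`, `Nef`, `SAmp` in `V`, where:
`SAmp` is a convex cone contained in `Nef`; `Nef` is the dual of `Eff` and `Eff` is
the dual of `Nef`; classes of effective divisors lie in `Eff`; and two distinct
irreducible effective numerically equivalent divisors with intersection number `0`
(hence disjoint) are semiample. Given four distinct irreducible effective orbit
divisors `D₁, D₂, D₃, D₄` with `Dᵢ² = 0`, `D₁·D₄ = D₂·D₃ = 0` and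
`D₁·D₂ = D₁·D₃ = D₂·D₄ = D₃·D₄ = 4`, then
`Eff(S) = Nef(S) = SAmp(S) = ℝ≥0⟨D₁, D₂⟩`, and `S` has no negative curve. -/
theorem stmt_11 (V : Type*) [AddCommGroup V] [Module ℝ V]
    (hdim : Module.finrank ℝ V = 2)
    (B : V →ₗ[ℝ] V →ₗ[ℝ] ℝ) (hsymm : ∀ x y : V, B x y = B y x)
    (Div : Type*) (cls : Div → V) (EffDiv : Set Div)
    (Eff Nef SAmp : Set V)
    (hSadd : ∀ x ∈ SAmp, ∀ y ∈ SAmp, x + y ∈ SAmp)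
    (hSsmul : ∀ x ∈ SAmp, ∀ c : ℝ, 0 ≤ c → c • x ∈ SAmp)
    (hSN : SAmp ⊆ Nef)
    (hNefdual : Nef = {x : V | ∀ y ∈ Eff, 0 ≤ B x y})
    (hEffdual : Eff = {x : V | ∀ y ∈ Nef, 0 ≤ B x y})
    (hcls : ∀ A ∈ EffDiv, cls A ∈ Eff)
    (hsa : ∀ A ∈ EffDiv, ∀ A' ∈ EffDiv, A ≠ A' → cls A = cls A' →
      B (cls A) (cls A') = 0 → cls A ∈ SAmp)
    (D1 D2 D3 D4 : Div)
    (hD1 : D1 ∈ EffDiv) (hD2 : D2 ∈ EffDiv) (hD3 : D3 ∈ EffDiv) (hD4 : D4 ∈ EffDiv)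
    (hne12 : D1 ≠ D2) (hne13 : D1 ≠ D3) (hne14 : D1 ≠ D4)
    (hne23 : D2 ≠ D3) (hne24 : D2 ≠ D4) (hne34 : D3 ≠ D4)
    (h11 : B (cls D1) (cls D1) = 0) (h22 : B (cls D2) (cls D2) = 0)
    (h33 : B (cls D3) (cls D3) = 0) (h44 : B (cls D4) (cls D4) = 0)
    (h14 : B (cls D1) (cls D4) = 0) (h23 : B (cls D2) (cls D3) = 0)
    (h12 : B (cls D1) (cls D2) = 4) (h13 : B (cls D1) (cls D3) = 4)
    (h24 : B (cls D2) (cls D4) = 4) (h34 : B (cls D3) (cls D4) = 4) :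
    Eff = Nef ∧ Nef = SAmp ∧
      SAmp = {x : V | ∃ a b : ℝ, 0 ≤ a ∧ 0 ≤ b ∧ x = a • cls D1 + b • cls D2} ∧
      ∀ A ∈ EffDiv, 0 ≤ B (cls A) (cls A) :=
  stmt_11_general V hdim B hsymm Div cls EffDiv Eff Nef SAmp hSadd hSsmul hSN hNefdual hEffdual hcls
    hsa D1 D2 D3 D4 hD1 hD2 hD3 hD4 hne14 hne23 h11 h22 h14 h23 h12 h13 h24
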